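/- arXiv:2503.13920 — 2 statements merged into one kernel-verified Lean document; each statement's English description precedes it below -/
import Mathlib

section
/- Let n ≥ 3 and F = X_1^{a_1} ⋯ X_n^{a_n}(X_1^{b_1} ⋯ X_{n-1}^{b_{n-1}} − X_n^{b_n}) with b_1 + ⋯ + b_{n-1} = b_n > 0, all b_i > 0. Set q = ⌊(a_n+1)/b_n⌋, m = min{⌊a_j/b_j⌋ : 1 ≤ j ≤ n−1} + 1, and G = x_n^{a_n+1} + Σ_{j=1}^{m} (x_1^{b_1} ⋯ x_{n-1}^{b_{n-1}})^j x_n^{a_n+1−j b_n}. If a_i < q b_i for some 1 ≤ i ≤ n−1, then G ∘ F = 0. -/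
open MvPolynomial

variable {K : Type*} [Field K] {n : ℕ}

/-- Contraction action of `R = K[x_1,…,x_n]` on the divided power algebra
`S = K[X_1,…,X_n]`: on monomials, `x^a ∘ X^b = X^(b-a)` if `a ≤ b` and `0` otherwise,
extended bilinearly. -/
noncomputable def contract (f F : MvPolynomial (Fin n) K) : MvPolynomial (Fin n) K :=
  ∑ a ∈ f.support, ∑ b ∈ F.support,
    if a ≤ b then monomial (b - a) (coeff a f * coeff b F) else 0

lemma contract_zero_left (F : MvPolynomial (Fin n) K) : contract 0 F = 0 := by
  simp [contract]

lemma contract_add_left (f g F : MvPolynomial (Fin n) K) :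
    contract (f + g) F = contract f F + contract g F := by
  classical
  have key : ∀ (p : MvPolynomial (Fin n) K) (s : Finset (Fin n →₀ ℕ)), p.support ⊆ s →
      contract p F = ∑ a ∈ s, ∑ b ∈ F.support,
        if a ≤ b then monomial (b - a) (coeff a p * coeff b F) else 0 := by
    intro p s hs
    refine Finset.sum_subset hs ?_
    intro a _ ha
    rw [notMem_support_iff] at ha
    simp [ha]
  rw [key f (f.support ∪ g.support) Finset.subset_union_left,
      key g (f.support ∪ g.support) Finset.subset_union_right,
      key (f + g) (f.support ∪ g.support) (fun a ha => support_add ha),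
      ← Finset.sum_add_distrib]
  refine Finset.sum_congr rfl fun a _ => ?_
  rw [← Finset.sum_add_distrib]
  refine Finset.sum_congr rfl fun b _ => ?_
  split_ifs with h
  · rw [coeff_add, add_mul, map_add (monomial (b - a)) _ _]
  · rw [add_zero]

/-- The annihilator of `F` under the contraction action, as an ideal of `R`;
its members are exactly the `f` with `f ∘ F = 0`. -/
noncomputable def annIdeal (F : MvPolynomial (Fin n) K) : Ideal (MvPolynomial (Fin n) K) where
  carrier := {f | ∀ g, contract (g * f) F = 0}
  zero_mem' := fun g => by rw [mul_zero, contract_zero_left]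
  add_mem' := fun {p q} hp hq g => by
    rw [mul_add, contract_add_left, hp g, hq g, add_zero]
  smul_mem' := fun c p hp g => by
    rw [smul_eq_mul, ← mul_assoc]; exact hp (g * c)

/-- Complete intersection ideal: generated by a regular sequence of length `c`. -/
def IsCI (c : ℕ) {R : Type*} [CommRing R] (I : Ideal R) : Prop :=
  ∃ gs : List R, gs.length = c ∧ RingTheory.Sequence.IsRegular R gs ∧
    Ideal.span {x | x ∈ gs} = I

/-- The degree-`i` component of `A_F = R/Ann_R(F)`. -/
noncomputable def quotComponent (F : MvPolynomial (Fin n) K) (i : ℕ) :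
    Submodule K ((MvPolynomial (Fin n) K) ⧸ annIdeal F) :=
  (homogeneousSubmodule (Fin n) K i).map (Ideal.Quotient.mkₐ K (annIdeal F)).toLinearMap

/-- The strong Lefschetz property for a graded algebra given by the family `𝒜` of its
graded components: some linear form `ℓ` has all multiplication maps
`×ℓ^k : 𝒜_i → 𝒜_{i+k}` of maximal rank (injective or surjective). -/
def SLP (K : Type*) {A : Type*} [CommSemiring K] [CommRing A] [Algebra K A]
    (𝒜 : ℕ → Submodule K A) : Prop :=
  ∃ ℓ ∈ 𝒜 1, ∀ i k : ℕ, 0 < k →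
    (∀ x ∈ 𝒜 i, ℓ ^ k * x = 0 → x = 0) ∨ (∀ y ∈ 𝒜 (i + k), ∃ x ∈ 𝒜 i, ℓ ^ k * x = y)


lemma contract_zero_right (f : MvPolynomial (Fin n) K) : contract f 0 = 0 := by
  simp [contract]

lemma contract_add_right (f F G : MvPolynomial (Fin n) K) :
    contract f (F + G) = contract f F + contract f G := by
  classical
  have key : ∀ (p : MvPolynomial (Fin n) K) (s : Finset (Fin n →₀ ℕ)), p.support ⊆ s →
      contract f p = ∑ a ∈ f.support, ∑ b ∈ s,
        if a ≤ b then monomial (b - a) (coeff a f * coeff b p) else 0 := by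
    intro p s hs
    refine Finset.sum_congr rfl fun a _ => Finset.sum_subset hs ?_
    intro b _ hbb
    rw [notMem_support_iff] at hbb
    simp [hbb]
  rw [key F (F.support ∪ G.support) Finset.subset_union_left,
      key G (F.support ∪ G.support) Finset.subset_union_right,
      key (F + G) (F.support ∪ G.support) (fun a ha => support_add ha),
      ← Finset.sum_add_distrib]
  refine Finset.sum_congr rfl fun a _ => ?_
  rw [← Finset.sum_add_distrib]
  refine Finset.sum_congr rfl fun b _ => ?_
  split_ifs with h
  · rw [coeff_add, mul_add, map_add]
  · rw [add_zero]

lemma contract_sum_left {ι : Type*} (s : Finset ι) (f : ι → MvPolynomial (Fin n) K)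
    (F : MvPolynomial (Fin n) K) :
    contract (∑ i ∈ s, f i) F = ∑ i ∈ s, contract (f i) F := by
  classical
  induction s using Finset.induction with
  | empty => simp [contract_zero_left]
  | insert _ _ h ih => rw [Finset.sum_insert h, contract_add_left, ih, Finset.sum_insert h]

lemma contract_monomial (u v : Fin n →₀ ℕ) (c d : K) :
    contract (monomial u c) (monomial v d) =
      if u ≤ v then monomial (v - u) (c * d) else 0 := by
  classical
  by_cases hc : c = 0
  · subst hc; simp [contract]
  by_cases hd : d = 0
  · subst hd; simp [contract]
  rw [contract, support_monomial, support_monomial, if_neg hc, if_neg hd]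
  simp [coeff_monomial]

lemma prod_X_pow_eq_monomial'' {ι : Type*} [DecidableEq ι] (s : Finset ι) (d : ι → ℕ) :
    (∏ i ∈ s, (X i : MvPolynomial ι K) ^ d i) =
      monomial (∑ i ∈ s, Finsupp.single i (d i)) 1 := by
  induction s using Finset.induction with
  | empty => simp
  | insert _ _ h ih =>
      rw [Finset.prod_insert h, ih, X_pow_eq_monomial, monomial_mul, Finset.sum_insert h, one_mul]
/-- If `a_i < q b_i` for some `i ≤ n-1`, then `G ∘ F = 0` for
`G = x_n^{a_n+1} + Σ_{j=1}^{m} (x_1^{b_1} ⋯ x_{n-1}^{b_{n-1}})^j x_n^{a_n+1-j b_n}`. -/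
theorem stmt5 [CharZero K] {m : ℕ} (hn : 3 ≤ m + 1)
    (a b : Fin (m + 1) → ℕ) (hb : ∀ i, 0 < b i)
    (hne : (Finset.Iio (Fin.last m)).Nonempty)
    (hsum : ∑ i ∈ Finset.Iio (Fin.last m), b i = b (Fin.last m))
    (F : MvPolynomial (Fin (m + 1)) K)
    (hF : F = (∏ i, (X i : MvPolynomial (Fin (m + 1)) K) ^ a i) *
      ((∏ i ∈ Finset.Iio (Fin.last m), (X i : MvPolynomial (Fin (m + 1)) K) ^ b i)
        - X (Fin.last m) ^ b (Fin.last m)))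
    (q : ℕ) (hq : q = (a (Fin.last m) + 1) / b (Fin.last m))
    (mm : ℕ) (hmm : mm = (Finset.Iio (Fin.last m)).inf' hne (fun j => a j / b j) + 1)
    (G : MvPolynomial (Fin (m + 1)) K)
    (hG : G = X (Fin.last m) ^ (a (Fin.last m) + 1) +
      ∑ j ∈ Finset.Icc 1 mm,
        (∏ i ∈ Finset.Iio (Fin.last m), (X i : MvPolynomial (Fin (m + 1)) K) ^ b i) ^ j *
          X (Fin.last m) ^ (a (Fin.last m) + 1 - j * b (Fin.last m)))
    (hlt : ∃ i ∈ Finset.Iio (Fin.last m), a i < q * b i) :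
    contract G F = 0 := by
  classical
  obtain ⟨i0, hi0, hinf0⟩ := Finset.exists_mem_eq_inf' hne (fun j => a j / b j)
  have hmm' : mm = a i0 / b i0 + 1 := by rw [hmm, hinf0]
  have hinfle : ∀ i ∈ Finset.Iio (Fin.last m), a i0 / b i0 ≤ a i / b i := by
    intro i hi; rw [← hinf0]; exact Finset.inf'_le _ hi
  clear hmm hinf0
  obtain ⟨N, hN⟩ : ∃ N, mm = N + 1 := ⟨_, hmm'⟩
  set A : Fin (m+1) →₀ ℕ := ∑ i, Finsupp.single i (a i) with hA
  set B : Fin (m+1) →₀ ℕ :=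
    ∑ i ∈ Finset.Iio (Fin.last m), Finsupp.single i (b i) with hB
  set C : Fin (m+1) →₀ ℕ := Finsupp.single (Fin.last m) (b (Fin.last m)) with hC
  have hAapp : ∀ i, A i = a i := by
    intro i
    rw [hA, Finsupp.finset_sum_apply]
    simp [Finsupp.single_apply]
  have hBapp : ∀ i, B i = if i < Fin.last m then b i else 0 := by
    intro i
    rw [hB, Finsupp.finset_sum_apply]
    simp only [Finsupp.single_apply]
    rw [Finset.sum_ite_eq' (Finset.Iio (Fin.last m)) i b]
    simp only [Finset.mem_Iio]
  -- exponents of G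
  set γ : ℕ → (Fin (m+1) →₀ ℕ) := fun j => j • B +
    Finsupp.single (Fin.last m) (a (Fin.last m) + 1 - j * b (Fin.last m)) with hγ
  have hγapp : ∀ j i, γ j i = j * B i +
      (if Fin.last m = i then a (Fin.last m) + 1 - j * b (Fin.last m) else 0) := by
    intro j i
    rw [hγ]
    simp only [Finsupp.add_apply, Finsupp.smul_apply, smul_eq_mul, Finsupp.single_apply]
  -- arithmetic facts
  have hbn : 0 < b (Fin.last m) := hb (Fin.last m)
  have hq' : q * b (Fin.last m) ≤ a (Fin.last m) + 1 := by
    rw [hq]; exact Nat.div_mul_le_self _ _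
  have hmq : mm ≤ q := by
    obtain ⟨i, hi, hia⟩ := hlt
    have h1 : a i / b i < q := (Nat.div_lt_iff_lt_mul (hb i)).2 hia
    have h2 := hinfle i hi
    omega
  have hjbn : ∀ j, j ≤ mm → j * b (Fin.last m) ≤ a (Fin.last m) + 1 := fun j hj =>
    le_trans (Nat.mul_le_mul_right _ (le_trans hj hmq)) hq'
  have hkey : ∀ j, j < mm → ∀ i : Fin (m+1), i < Fin.last m → j * b i ≤ a i := by
    intro j hj i hi
    have h2 := hinfle i (Finset.mem_Iio.2 hi)
    have : j ≤ a i / b i := by omega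
    exact le_trans (Nat.mul_le_mul_right _ this) (Nat.div_mul_le_self _ _)
  have hmul : ∀ j c : ℕ, 1 ≤ j → j * c = (j - 1) * c + c := by
    intro j c hj
    cases j with
    | zero => omega
    | succ k => simp [Nat.succ_mul]
  -- rewrite F and G in monomial form
  have hFm : F = monomial (A + B) 1 + monomial (A + C) (-1) := by
    rw [hF, prod_X_pow_eq_monomial'', prod_X_pow_eq_monomial'', X_pow_eq_monomial,
      mul_sub, monomial_mul, monomial_mul, ← hA, ← hB, ← hC, sub_eq_add_neg, ← map_neg]
    norm_num
  have hGm : G = monomial (γ 0) 1 + ∑ j ∈ Finset.Icc 1 mm, monomial (γ j) 1 := by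
    rw [hG]
    congr 1
    · rw [X_pow_eq_monomial, hγ]
      simp
    · refine Finset.sum_congr rfl fun j hj => ?_
      rw [prod_X_pow_eq_monomial'', ← hB, monomial_pow, X_pow_eq_monomial, monomial_mul,
        one_pow, one_mul, hγ]
  -- conditions
  have cond1 : ∀ j ∈ Finset.Icc 1 mm, γ j ≤ A + B := by
    intro j hj
    rw [Finset.mem_Icc] at hj
    rw [Finsupp.le_def]
    intro i
    rw [hγapp, Finsupp.add_apply, hAapp, hBapp]
    rcases (Fin.le_last i).lt_or_eq with hi | hi
    · have h1 : (j - 1) * b i ≤ a i := hkey (j-1) (by omega) i hi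
      have h2 := hmul j (b i) hj.1
      have hne' : ¬ (Fin.last m = i) := fun h => absurd (h ▸ hi) (lt_irrefl _)
      simp only [if_pos hi, if_neg hne']
      omega
    · subst hi
      have h3 : b (Fin.last m) ≤ j * b (Fin.last m) :=
        Nat.le_mul_of_pos_left _ (by omega)
      have h4 := hjbn j hj.2
      simp only [if_neg (lt_irrefl (Fin.last m)), if_pos rfl, eq_self_iff_true, if_true, ite_true]
      omega
  have cond2 : ∀ j, j ≤ mm - 1 → γ j ≤ A + C := by
    intro j hj
    rw [Finsupp.le_def]
    intro i
    rw [hγapp, Finsupp.add_apply, hAapp, hC, Finsupp.single_apply, hBapp]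
    rcases (Fin.le_last i).lt_or_eq with hi | hi
    · have h1 : j * b i ≤ a i := hkey j (by omega) i hi
      have hne' : ¬ (Fin.last m = i) := fun h => absurd (h ▸ hi) (lt_irrefl _)
      simp only [if_pos hi, if_neg hne']
      omega
    · subst hi
      simp only [if_neg (lt_irrefl (Fin.last m)), if_pos rfl, eq_self_iff_true, if_true, ite_true]
      omega
  have ncond1 : ¬ γ 0 ≤ A + B := by
    intro h
    have h0 := h (Fin.last m)
    rw [hγapp, Finsupp.add_apply, hAapp, hBapp] at h0
    simp at h0
  have ncond2 : ¬ γ mm ≤ A + C := by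
    rw [Finset.mem_Iio] at hi0
    intro h
    have h0 := h i0
    rw [hγapp, Finsupp.add_apply, hAapp, hC, Finsupp.single_apply, hBapp] at h0
    have hne' : ¬ (Fin.last m = i0) := fun h => absurd (h ▸ hi0) (lt_irrefl _)
    simp only [if_pos hi0, if_neg hne'] at h0
    have h2 : a i0 / b i0 < mm := by rw [hmm']; exact Nat.lt_succ_self _
    have h3 := (Nat.div_lt_iff_lt_mul (hb i0)).1 h2
    omega
  clear hmm' hinfle
  -- key exponent identity
  have keyid : ∀ j ∈ Finset.Icc 1 mm, A + B - γ j = A + C - γ (j - 1) := by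
    intro j hj
    rw [Finset.mem_Icc] at hj
    ext i
    rw [Finsupp.tsub_apply, Finsupp.tsub_apply, hγapp, hγapp, Finsupp.add_apply,
      Finsupp.add_apply, hAapp, hBapp, hC, Finsupp.single_apply]
    rcases (Fin.le_last i).lt_or_eq with hi | hi
    · have h1 : (j - 1) * b i ≤ a i := hkey (j-1) (by omega) i hi
      have h2 := hmul j (b i) hj.1
      have hne' : ¬ (Fin.last m = i) := fun h => absurd (h ▸ hi) (lt_irrefl _)
      simp only [if_pos hi, if_neg hne']
      omega
    · subst hi
      have h2 := hmul j (b (Fin.last m)) hj.1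
      have h3 := hjbn j hj.2
      have h4 : (j - 1) * b (Fin.last m) ≤ a (Fin.last m) + 1 := by omega
      simp only [if_neg (lt_irrefl (Fin.last m)), if_pos rfl, eq_self_iff_true, if_true, ite_true]
      omega
  -- now compute
  rw [hGm, hFm, contract_add_left, contract_add_right, contract_add_right,
    contract_sum_left, contract_sum_left, contract_monomial, contract_monomial,
    if_neg ncond1, if_pos (cond2 0 (by omega))]
  have e1 : ∑ j ∈ Finset.Icc 1 mm, contract (monomial (γ j) 1) (monomial (A + B) (1:K)) =
      ∑ j ∈ Finset.Icc 1 mm, monomial (A + C - γ (j - 1)) (1:K) := by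
    refine Finset.sum_congr rfl fun j hj => ?_
    rw [contract_monomial, if_pos (cond1 j hj), keyid j hj, one_mul]
  have e2 : ∑ j ∈ Finset.Icc 1 mm, contract (monomial (γ j) 1) (monomial (A + C) (-1:K)) =
      ∑ j ∈ Finset.Icc 1 (mm - 1), - monomial (A + C - γ j) (1:K) := by
    have hmm1 : mm = (mm - 1) + 1 := by omega
    rw [hmm1, Finset.sum_Icc_succ_top (by omega), ← hmm1, contract_monomial,
      if_neg ncond2, add_zero]
    refine Finset.sum_congr rfl fun j hj => ?_
    rw [Finset.mem_Icc] at hj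
    rw [contract_monomial, if_pos (cond2 j hj.2)]
    rw [← map_neg]
    norm_num
  rw [e1, e2]
  have e3 : ∑ j ∈ Finset.Icc 1 mm, monomial (A + C - γ (j - 1)) (1:K) =
      ∑ j ∈ Finset.Icc 0 (mm - 1), monomial (A + C - γ j) (1:K) := by
    refine Finset.sum_bij' (fun j _ => j - 1) (fun j _ => j + 1) ?_ ?_ ?_ ?_ ?_
    · intro j hj; rw [Finset.mem_Icc] at hj
      show j - 1 ∈ Finset.Icc 0 (mm - 1); rw [Finset.mem_Icc]; omega
    · intro j hj; rw [Finset.mem_Icc] at hj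
      show j + 1 ∈ Finset.Icc 1 mm; rw [Finset.mem_Icc]; omega
    · intro j hj; rw [Finset.mem_Icc] at hj
      show j - 1 + 1 = j; omega
    · intro j hj; rw [Finset.mem_Icc] at hj
      show j + 1 - 1 = j; omega
    · intro j hj; rfl
  have e4 : Finset.Icc 0 (mm - 1) = insert 0 (Finset.Icc 1 (mm - 1)) := by
    ext j; simp [Finset.mem_Icc]; omega
  rw [e3, e4, Finset.sum_insert (by simp)]
  simp only [one_mul, map_neg, neg_neg, mul_neg, mul_one]
  rw [Finset.sum_neg_distrib]
  abel
end

section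
/- Let A = K[x_1,…,x_{n-1}]/(x_1^{c_1}, …, x_{n-1}^{c_{n-1}}) be an Artinian monomial complete intersection over a field K of characteristic zero, with all c_i ≥ 1. Then A has the strong Lefschetz property, with ℓ = x_1 + ⋯ + x_{n-1} a strong Lefschetz element. -/
open MvPolynomial

variable {K : Type*} [Field K] {n : ℕ}

section SWProof
set_option maxHeartbeats 2000000
set_option synthInstance.maxHeartbeats 200000

open LinearMap

section Core
variable {K A : Type*} [Field K] [CharZero K] [AddCommGroup A] [Module K A]
variable (V : ℕ → Submodule K A) (e f : A →ₗ[K] A) (N : ℕ)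

/-- Iterated commutator identity for an sl2-like pair. -/
theorem sl2_pow_comm
    (hcomm : ∀ d : ℕ, ∀ v ∈ V d, f (e v) - e (f v) = (((N : K) - 2 * d)) • v)
    (he : ∀ d : ℕ, ∀ v ∈ V d, e v ∈ V (d + 1)) :
    ∀ (r d : ℕ), ∀ v ∈ V d,
      f ((e ^ r) v) = (e ^ r) (f v) + ((r : K) * ((N : K) - 2 * d - r + 1)) • (e ^ (r - 1)) v := by
  intro r
  induction r with
  | zero => intro d v hv; simp
  | succ r ih =>
    intro d v hv
    have hev : e v ∈ V (d + 1) := he d v hv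
    have h1 : (e ^ (r + 1)) v = (e ^ r) (e v) := by
      rw [pow_succ, Module.End.mul_apply]
    have h2 := ih (d + 1) (e v) hev
    have h3 : f (e v) = e (f v) + ((N : K) - 2 * d) • v := by
      rw [← hcomm d v hv]; abel
    have h4 : (e ^ r) (e (f v)) = (e ^ (r + 1)) (f v) := by
      rw [pow_succ, Module.End.mul_apply]
    rcases Nat.eq_zero_or_pos r with hr | hr
    · subst hr
      simp only [zero_add, pow_one, pow_zero, one_apply, Nat.cast_one]
      rw [h3]
      congr 2
      ring_nf
    · have hrr' : r - 1 + 1 = r := Nat.succ_pred_eq_of_pos hr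
      have h5 : (e ^ (r - 1)) (e v) = (e ^ r) v := by
        conv_rhs => rw [← hrr', pow_succ, Module.End.mul_apply]
      rw [h1, h2, h3, map_add, map_smul, h4, h5]
      have : r + 1 - 1 = r := rfl
      rw [this, add_assoc, ← add_smul]
      congr 1
      push_cast
      ring_nf

/-- From minimality: a vector killed by `f` and by a power of `e` within range is zero. -/
theorem sl2_min
    (hcomm : ∀ d : ℕ, ∀ v ∈ V d, f (e v) - e (f v) = (((N : K) - 2 * d)) • v)
    (he : ∀ d : ℕ, ∀ v ∈ V d, e v ∈ V (d + 1))
    (d : ℕ) (hd : 2 * d ≤ N) (v : A) (hv : v ∈ V d) (hfv : f v = 0)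
    (hev : (e ^ (N - 2 * d)) v = 0) : v = 0 := by
  classical
  by_contra hne
  have hex : ∃ r, (e ^ r) v = 0 := ⟨N - 2 * d, hev⟩
  let r := Nat.find hex
  have hrmem : (e ^ r) v = 0 := Nat.find_spec hex
  have hrpos : 0 < r := by
    rcases Nat.eq_zero_or_pos r with h | h
    · exact absurd (by simpa [h] using hrmem : v = 0) hne
    · exact h
  have hrle : r ≤ N - 2 * d := Nat.find_le hev
  have hprev : (e ^ (r - 1)) v ≠ 0 := Nat.find_min hex (Nat.sub_lt hrpos one_pos)
  have key := sl2_pow_comm V e f N hcomm he r d v hv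
  rw [hrmem, map_zero, hfv, map_zero, zero_add] at key
  rcases smul_eq_zero.mp key.symm with h | h
  · exfalso
    rcases mul_eq_zero.mp h with h' | h'
    · exact (Nat.cast_ne_zero.mpr hrpos.ne') h'
    · set t := N - 2 * d - r with ht
      have hN : N = 2 * d + r + t := by omega
      have : ((N : K) - 2 * d - r + 1) = (t : K) + 1 := by
        rw [hN]; push_cast; ring
      rw [this] at h'
      exact Nat.cast_add_one_ne_zero t h'
  · exact hprev h

/-- Core injectivity lemma: hard Lefschetz injectivity from sl2-like relations. -/
theorem sl2_injective
    (hcomm : ∀ d : ℕ, ∀ v ∈ V d, f (e v) - e (f v) = (((N : K) - 2 * d)) • v)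
    (he : ∀ d : ℕ, ∀ v ∈ V d, e v ∈ V (d + 1))
    (hf : ∀ d : ℕ, ∀ v ∈ V (d + 1), f v ∈ V d)
    (hf0 : ∀ v ∈ V 0, f v = 0) :
    ∀ d : ℕ, 2 * d ≤ N → ∀ v ∈ V d, (e ^ (N - 2 * d)) v = 0 → v = 0 := by
  intro d
  induction d with
  | zero =>
    intro hd v hv hev
    exact sl2_min V e f N hcomm he 0 hd v hv (hf0 v hv) hev
  | succ d ih =>
    intro hd v hv hev
    have hd' : 2 * d ≤ N := by omega
    have hfv0 : f v = 0 := by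
      apply ih hd' (f v) (hf d v hv)
      have key := sl2_pow_comm V e f N hcomm he (N - 2 * d) (d + 1) v hv
      have hz1 : (e ^ (N - 2 * d)) v = 0 := by
        have hL : N - 2 * d = 2 + (N - 2 * (d + 1)) := by omega
        rw [hL, pow_add, Module.End.mul_apply, hev, map_zero]
      have hz2 : (e ^ (N - 2 * d - 1)) v = 0 := by
        have hL : N - 2 * d - 1 = 1 + (N - 2 * (d + 1)) := by omega
        rw [hL, pow_add, Module.End.mul_apply, hev, map_zero]
      rw [hz1, map_zero, hz2, smul_zero, add_zero] at key
      exact key.symm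
    exact sl2_min V e f N hcomm he (d + 1) hd v hv hfv0 hev
end Core

open MvPolynomial

namespace SW
variable {K : Type*} [Field K] {m : ℕ}

/-- degree as a sum over all of `Fin m` -/
lemma degree_univ (a : Fin m →₀ ℕ) : a.degree = ∑ i, a i := by
  rw [Finsupp.degree]
  exact Finset.sum_subset (Finset.subset_univ _) (by
    intro i _ hi
    exact Finsupp.notMem_support_iff.mp hi)

noncomputable def ell (K : Type*) [Field K] (m : ℕ) : MvPolynomial (Fin m) K := ∑ i, X i

lemma pderiv_ell (i : Fin m) : pderiv i (ell K m) = 1 := by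
  rw [ell, map_sum]
  classical
  rw [Finset.sum_eq_single i (fun j _ hj => pderiv_X_of_ne hj) (by simp)]
  exact pderiv_X_self i

lemma ell_isHomogeneous : (ell K m).IsHomogeneous 1 := by
  apply IsHomogeneous.sum
  intro i _
  exact isHomogeneous_X _ _

/-- Euler's identity for homogeneous polynomials. -/
lemma euler {d : ℕ} {p : MvPolynomial (Fin m) K} (hp : p.IsHomogeneous d) :
    ∑ i, X i * pderiv i p = C (d : K) * p := by
  classical
  have key : ∀ a ∈ p.support, ∑ i, X i * pderiv i (monomial a (coeff a p))
      = C (d : K) * monomial a (coeff a p) := by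
    intro a ha
    have hdeg : ∑ i, a i = d := by
      rw [← degree_univ a, Finsupp.degree_eq_weight_one]
      exact hp (mem_support_iff.mp ha)
    have key2 : ∀ i : Fin m, X i * pderiv i (monomial a (coeff a p))
        = (a i : K) • monomial a (coeff a p) := by
      intro i
      rw [pderiv_monomial, ← pow_one (X i), X_pow_eq_monomial, monomial_mul, one_mul]
      rcases Nat.eq_zero_or_pos (a i) with h | h
      · simp [h]
      · have hs : Finsupp.single i 1 + (a - Finsupp.single i 1) = a := by
          rw [add_comm]
          exact tsub_add_cancel_of_le (Finsupp.single_le_iff.mpr h)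
        rw [hs, smul_monomial]
        congr 1
        rw [smul_eq_mul, mul_comm]
    rw [Finset.sum_congr rfl (fun i _ => key2 i), ← Finset.sum_smul, ← Nat.cast_sum, hdeg,
      smul_eq_C_mul]
  calc ∑ i, X i * pderiv i p
      = ∑ i, X i * pderiv i (∑ a ∈ p.support, monomial a (coeff a p)) := by
        rw [support_sum_monomial_coeff]
    _ = ∑ a ∈ p.support, ∑ i, X i * pderiv i (monomial a (coeff a p)) := by
        simp_rw [map_sum, Finset.mul_sum]
        rw [Finset.sum_comm]
    _ = ∑ a ∈ p.support, C (d : K) * monomial a (coeff a p) :=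
        Finset.sum_congr rfl key
    _ = C (d : K) * p := by rw [← Finset.mul_sum, support_sum_monomial_coeff]


/-- The lowering operator. -/
noncomputable def Fop (c : Fin m → ℕ) : MvPolynomial (Fin m) K →ₗ[K] MvPolynomial (Fin m) K :=
  ∑ i, (LinearMap.mulLeft K (C (c i : K)) ∘ₗ (pderiv i).toLinearMap
    - (pderiv i).toLinearMap ∘ₗ LinearMap.mulLeft K (X i) ∘ₗ (pderiv i).toLinearMap)

lemma Fop_apply (c : Fin m → ℕ) (p : MvPolynomial (Fin m) K) :
    Fop c p = ∑ i, (C (c i : K) * pderiv i p - pderiv i (X i * pderiv i p)) := by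
  rw [Fop, LinearMap.sum_apply]
  rfl

/-- The commutator identity `[F, ℓ·] = N - 2 deg` on homogeneous polynomials. -/
lemma comm_identity (c : Fin m → ℕ) (hc : ∀ i, 1 ≤ c i) {d : ℕ} {p : MvPolynomial (Fin m) K}
    (hp : p.IsHomogeneous d) :
    Fop c (ell K m * p) - ell K m * Fop c p
      = C (((∑ i, (c i - 1) : ℕ) : K) - 2 * d) * p := by
  rw [Fop_apply, Fop_apply, Finset.mul_sum, ← Finset.sum_sub_distrib]
  have key : ∀ i : Fin m,
      (C (c i : K) * pderiv i (ell K m * p) - pderiv i (X i * pderiv i (ell K m * p)))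
        - ell K m * (C (c i : K) * pderiv i p - pderiv i (X i * pderiv i p))
      = (C (c i : K) - 1) * p - 2 * (X i * pderiv i p) := by
    intro i
    simp only [pderiv_mul, pderiv_ell, pderiv_X_self, map_add, one_mul]
    ring
  rw [Finset.sum_congr rfl (fun i _ => key i)]
  rw [Finset.sum_sub_distrib, ← Finset.sum_mul, ← Finset.mul_sum, euler hp]
  have hcast : (∑ i, (C ((c i : K)) - 1) : MvPolynomial (Fin m) K)
      = C (((∑ i, (c i - 1) : ℕ) : K)) := by
    rw [Nat.cast_sum, map_sum]
    congr 1
    ext i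
    rw [Nat.cast_sub (hc i), map_sub, Nat.cast_one, map_one]
  rw [hcast, map_sub, map_mul,
    show ((2 : MvPolynomial (Fin m) K)) = C (2 : K) from (map_ofNat C 2).symm]
  ring


lemma single_sum (i : Fin m) : ∑ j, (Finsupp.single i 1 : Fin m →₀ ℕ) j = 1 := by
  classical
  simp [Finsupp.single_apply]

lemma pderiv_mem_homogeneous {d : ℕ} {p : MvPolynomial (Fin m) K} (i : Fin m)
    (hp : p ∈ homogeneousSubmodule (Fin m) K (d + 1)) :
    pderiv i p ∈ homogeneousSubmodule (Fin m) K d := by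
  classical
  rw [← support_sum_monomial_coeff p, map_sum]
  apply Submodule.sum_mem
  intro a ha
  rw [pderiv_monomial]
  rcases Nat.eq_zero_or_pos (a i) with h | h
  · simp [h]
  · have hsum : ∑ j, a j = d + 1 := by
      rw [← degree_univ a, Finsupp.degree_eq_weight_one]
      exact (mem_homogeneousSubmodule _ _).mp hp (mem_support_iff.mp ha)
    have hle : Finsupp.single i 1 ≤ a := Finsupp.single_le_iff.mpr h
    set b : Fin m →₀ ℕ := a - Finsupp.single i 1 with hb
    have hsub : b + Finsupp.single i 1 = a := tsub_add_cancel_of_le hle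
    have h2 : ∑ j, (b j + (Finsupp.single i 1 : Fin m →₀ ℕ) j) = ∑ j, a j :=
      Finset.sum_congr rfl (fun j _ => by rw [← Finsupp.add_apply, hsub])
    have h1 : (∑ j, b j) + 1 = d + 1 := by
      rw [← hsum, ← h2, Finset.sum_add_distrib, single_sum]
    have hdeg : b.degree = d := by
      rw [degree_univ]; omega
    exact isHomogeneous_monomial _ hdeg

lemma Fop_mem_homogeneous (c : Fin m → ℕ) {d : ℕ} {p : MvPolynomial (Fin m) K}
    (hp : p ∈ homogeneousSubmodule (Fin m) K (d + 1)) :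
    Fop c p ∈ homogeneousSubmodule (Fin m) K d := by
  rw [Fop_apply]
  apply Submodule.sum_mem
  intro i _
  apply Submodule.sub_mem
  · rw [← smul_eq_C_mul]
    exact Submodule.smul_mem _ _ (pderiv_mem_homogeneous i hp)
  · apply pderiv_mem_homogeneous
    have hX : (X i : MvPolynomial (Fin m) K).IsHomogeneous 1 := isHomogeneous_X _ _
    have := hX.mul ((mem_homogeneousSubmodule _ _).mp (pderiv_mem_homogeneous i hp))
    rw [mem_homogeneousSubmodule, show d + 1 = 1 + d from by omega]
    exact this

lemma pderiv_zero_degree {p : MvPolynomial (Fin m) K} (i : Fin m)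
    (hp : p ∈ homogeneousSubmodule (Fin m) K 0) :
    pderiv i p = 0 := by
  classical
  rw [← support_sum_monomial_coeff p, map_sum]
  apply Finset.sum_eq_zero
  intro a ha
  have hsum : ∑ j, a j = 0 := by
    rw [← degree_univ a, Finsupp.degree_eq_weight_one]
    exact (mem_homogeneousSubmodule _ _).mp hp (mem_support_iff.mp ha)
  have h0 : a i = 0 := by
    have := Finset.sum_eq_zero_iff.mp hsum i (Finset.mem_univ i)
    exact this
  rw [pderiv_monomial, h0]
  simp

lemma Fop_zero_degree (c : Fin m → ℕ) {p : MvPolynomial (Fin m) K}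
    (hp : p ∈ homogeneousSubmodule (Fin m) K 0) :
    Fop c p = 0 := by
  rw [Fop_apply]
  apply Finset.sum_eq_zero
  intro i _
  rw [pderiv_zero_degree i hp]
  simp

lemma monomial_mem_ideal (c : Fin m → ℕ) {a : Fin m →₀ ℕ} (r : K) {j : Fin m}
    (h : c j ≤ a j) :
    monomial a r ∈ Ideal.span (Set.range fun i => (X i : MvPolynomial (Fin m) K) ^ c i) := by
  have ha : a = Finsupp.single j (c j) + (a - Finsupp.single j (c j)) := by
    rw [add_comm]
    exact (tsub_add_cancel_of_le (Finsupp.single_le_iff.mpr h)).symm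
  have heq : monomial a r
      = X j ^ c j * monomial (a - Finsupp.single j (c j)) r := by
    rw [X_pow_eq_monomial, monomial_mul, one_mul, ← ha]
  rw [heq]
  exact Ideal.mul_mem_right _ _ (Ideal.subset_span ⟨j, rfl⟩)

lemma high_degree_mem_ideal (c : Fin m → ℕ) (hc : ∀ i, 1 ≤ c i) {d : ℕ}
    {p : MvPolynomial (Fin m) K} (hp : p ∈ homogeneousSubmodule (Fin m) K d)
    (hd : ∑ i, (c i - 1) < d) :
    p ∈ Ideal.span (Set.range fun i => (X i : MvPolynomial (Fin m) K) ^ c i) := by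
  classical
  rw [← support_sum_monomial_coeff p]
  apply Ideal.sum_mem
  intro a ha
  have hsum : ∑ j, a j = d := by
    rw [← degree_univ a, Finsupp.degree_eq_weight_one]
    exact (mem_homogeneousSubmodule _ _).mp hp (mem_support_iff.mp ha)
  have : ∃ j, c j ≤ a j := by
    by_contra hno
    push_neg at hno
    have : ∑ j, a j ≤ ∑ j, (c j - 1) := by
      apply Finset.sum_le_sum
      intro j _
      have := hno j
      have := hc j
      omega
    omega
  obtain ⟨j, hj⟩ := this
  exact monomial_mem_ideal c _ hj

lemma Fop_mul_pow_mem (c : Fin m → ℕ) (hc : ∀ i, 1 ≤ c i) (g : MvPolynomial (Fin m) K)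
    (j : Fin m) :
    Fop c (g * X j ^ c j) ∈ Ideal.span (Set.range fun i => (X i : MvPolynomial (Fin m) K) ^ c i) := by
  have hgen : (X j : MvPolynomial (Fin m) K) ^ c j ∈
      Ideal.span (Set.range fun i => (X i : MvPolynomial (Fin m) K) ^ c i) :=
    Ideal.subset_span ⟨j, rfl⟩
  rw [Fop_apply]
  apply Ideal.sum_mem
  intro i _
  by_cases hij : i = j
  · subst hij
    obtain ⟨k, hk⟩ : ∃ k, c i = k + 1 := ⟨c i - 1, by have := hc i; omega⟩
    have hnat : ∀ q : MvPolynomial (Fin m) K, ∀ n : ℕ,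
        pderiv i ((n : MvPolynomial (Fin m) K) * q) = (n : MvPolynomial (Fin m) K) * pderiv i q := by
      intro q n
      rw [pderiv_mul, show ((n : MvPolynomial (Fin m) K)) = C ((n : K)) from
        (map_natCast (C : K →+* MvPolynomial (Fin m) K) n).symm, pderiv_C, zero_mul, zero_add]
    have key : C ((c i : K)) * pderiv i (g * X i ^ c i)
        - pderiv i (X i * pderiv i (g * X i ^ c i))
        = X i ^ c i * (-(((k + 2 : ℕ) : MvPolynomial (Fin m) K)) * pderiv i g
            - X i * pderiv i (pderiv i g)) := by
      rw [hk, map_natCast (C : K →+* MvPolynomial (Fin m) K)]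
      have hDu : pderiv i ((X i : MvPolynomial (Fin m) K) ^ (k+1)) = (((k+1 : ℕ) : MvPolynomial (Fin m) K)) * X i ^ k := by
        rw [pderiv_pow, Nat.add_sub_cancel, pderiv_X_self, mul_one]
      have h1 : pderiv i (g * X i ^ (k+1))
          = pderiv i g * X i ^ (k+1) + (((k+1:ℕ) : MvPolynomial (Fin m) K)) * X i ^ k * g := by
        rw [pderiv_mul, hDu]; ring
      have hX : pderiv i (X i * pderiv i g) = pderiv i g + X i * pderiv i (pderiv i g) := by
        rw [pderiv_mul, pderiv_X_self, one_mul]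
      rw [h1]
      rw [show (X i : MvPolynomial (Fin m) K) * (pderiv i g * X i ^ (k+1)
            + (((k+1:ℕ) : MvPolynomial (Fin m) K)) * X i ^ k * g)
        = (X i * pderiv i g) * X i ^ (k+1)
            + (((k+1:ℕ) : MvPolynomial (Fin m) K)) * (g * X i ^ (k+1)) by rw [pow_succ']; ring]
      rw [map_add, pderiv_mul (f := X i * pderiv i g), hX, hDu, hnat, h1]
      rw [pow_succ']
      push_cast
      ring
    rw [key]
    exact Ideal.mul_mem_right _ _ hgen
  · have hD0 : pderiv i ((X j : MvPolynomial (Fin m) K) ^ c j) = 0 := by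
      rw [pderiv_pow, pderiv_X_of_ne (fun h => hij h.symm), mul_zero]
    have h1 : pderiv i (g * X j ^ c j) = pderiv i g * X j ^ c j := by
      rw [pderiv_mul, hD0, mul_zero, add_zero]
    have key : C ((c i : K)) * pderiv i (g * X j ^ c j)
        - pderiv i (X i * pderiv i (g * X j ^ c j))
        = X j ^ c j * (C ((c i : K)) * pderiv i g - pderiv i (X i * pderiv i g)) := by
      rw [h1, show X i * (pderiv i g * X j ^ c j) = (X i * pderiv i g) * X j ^ c j by ring,
        pderiv_mul, hD0, mul_zero, add_zero]
      ring
    rw [key]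
    exact Ideal.mul_mem_right _ _ hgen

lemma Fop_mem_ideal (c : Fin m → ℕ) (hc : ∀ i, 1 ≤ c i) {p : MvPolynomial (Fin m) K}
    (hp : p ∈ Ideal.span (Set.range fun i => (X i : MvPolynomial (Fin m) K) ^ c i)) :
    Fop c p ∈ Ideal.span (Set.range fun i => (X i : MvPolynomial (Fin m) K) ^ c i) := by
  obtain ⟨g, hg⟩ := Ideal.mem_span_range_iff_exists_fun.mp hp
  rw [← hg, map_sum]
  apply Ideal.sum_mem
  intro j _
  exact Fop_mul_pow_mem c hc (g j) j

end SW

namespace SW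
variable {K : Type*} [Field K] {m : ℕ}

section Quot
variable (c : Fin m → ℕ)

local notation "R" => MvPolynomial (Fin m) K
local notation "I" => Ideal.span (Set.range fun i => (X i : MvPolynomial (Fin m) K) ^ c i)
local notation "A" => MvPolynomial (Fin m) K ⧸ Ideal.span (Set.range fun i => (X i : MvPolynomial (Fin m) K) ^ c i)

/-- The graded component of the quotient. -/
noncomputable def Q (d : ℕ) : Submodule K A :=
  (homogeneousSubmodule (Fin m) K d).map
    (Ideal.Quotient.mkₐ K (Ideal.span (Set.range fun i => (X i : MvPolynomial (Fin m) K) ^ c i))).toLinearMap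

lemma mem_Q {d : ℕ} {v : A} :
    v ∈ Q c d ↔ ∃ p ∈ homogeneousSubmodule (Fin m) K d, Ideal.Quotient.mk _ p = v := by
  simp [Q, Submodule.mem_map, Ideal.Quotient.mkₐ_eq_mk]

lemma descend (hc : ∀ i, 1 ≤ c i) :
    ∃ G : A →ₗ[K] A, ∀ p : R,
      G (Ideal.Quotient.mk _ p) = Ideal.Quotient.mk _ (Fop c p) := by
  classical
  let P : Submodule (MvPolynomial (Fin m) K) (MvPolynomial (Fin m) K) := I
  let e := Submodule.Quotient.restrictScalarsEquiv K P
  have hmap : P.restrictScalars K ≤ (P.restrictScalars K).comap (Fop c) := by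
    intro p hp
    exact Fop_mem_ideal c hc hp
  let G0 : (R ⧸ P.restrictScalars K) →ₗ[K] (R ⧸ P.restrictScalars K) :=
    Submodule.mapQ _ _ (Fop c) hmap
  refine ⟨e.toLinearMap ∘ₗ G0 ∘ₗ e.symm.toLinearMap, fun p => ?_⟩
  have h1 : (Ideal.Quotient.mk (P : Ideal _) p) = Submodule.Quotient.mk p := rfl
  have h2 : e.symm (Submodule.Quotient.mk p) = Submodule.Quotient.mk p := by
    exact Submodule.Quotient.restrictScalarsEquiv_symm_mk K P p
  have h3 : G0 (Submodule.Quotient.mk p) = Submodule.Quotient.mk (Fop c p) := rfl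
  have h4 : e (Submodule.Quotient.mk (Fop c p)) = Submodule.Quotient.mk (Fop c p) := by
    exact Submodule.Quotient.restrictScalarsEquiv_mk K P (Fop c p)
  simp only [LinearMap.coe_comp, Function.comp_apply, LinearEquiv.coe_coe, h1]
  show e (G0 (e.symm (Submodule.Quotient.mk p))) = _
  rw [h2, h3, h4]
  rfl

end Quot
end SW

open SW in
theorem stmt19' {K : Type*} [Field K] [CharZero K] {m : ℕ} (c : Fin m → ℕ) (hc : ∀ i, 1 ≤ c i) :
    (Ideal.Quotient.mk (Ideal.span (Set.range fun i => (X i : MvPolynomial (Fin m) K) ^ c i))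
        (∑ i, X i)) ∈
      (homogeneousSubmodule (Fin m) K 1).map
        (Ideal.Quotient.mkₐ K
          (Ideal.span (Set.range fun i => (X i : MvPolynomial (Fin m) K) ^ c i))).toLinearMap ∧
    ∀ i k : ℕ, 0 < k →
      (∀ x ∈ (homogeneousSubmodule (Fin m) K i).map
          (Ideal.Quotient.mkₐ K
            (Ideal.span (Set.range fun i => (X i : MvPolynomial (Fin m) K) ^ c i))).toLinearMap,
        (Ideal.Quotient.mk _ (∑ i, X i)) ^ k * x = 0 → x = 0) ∨
      (∀ y ∈ (homogeneousSubmodule (Fin m) K (i + k)).map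
          (Ideal.Quotient.mkₐ K
            (Ideal.span (Set.range fun i => (X i : MvPolynomial (Fin m) K) ^ c i))).toLinearMap,
        ∃ x ∈ (homogeneousSubmodule (Fin m) K i).map
          (Ideal.Quotient.mkₐ K
            (Ideal.span (Set.range fun i => (X i : MvPolynomial (Fin m) K) ^ c i))).toLinearMap,
          (Ideal.Quotient.mk _ (∑ i, X i)) ^ k * x = y) := by
  classical
  obtain ⟨Fb, hFb⟩ := SW.descend (K := K) c hc
  set N : ℕ := ∑ i, (c i - 1) with hN
  set lq := Ideal.Quotient.mk
    (Ideal.span (Set.range fun i => (X i : MvPolynomial (Fin m) K) ^ c i)) (∑ i, X i) with hlq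
  set E := LinearMap.mulLeft K lq with hE
  -- mk as linear map smul fact
  have hsmul : ∀ (r : K) (p : MvPolynomial (Fin m) K),
      Ideal.Quotient.mk (Ideal.span (Set.range fun i => (X i : MvPolynomial (Fin m) K) ^ c i))
        (r • p) = r • Ideal.Quotient.mk _ p := by
    intro r p
    exact (Ideal.Quotient.mkₐ K
      (Ideal.span (Set.range fun i => (X i : MvPolynomial (Fin m) K) ^ c i))).toLinearMap.map_smul r p
  have hEmk : ∀ p : MvPolynomial (Fin m) K,
      E (Ideal.Quotient.mk _ p) = Ideal.Quotient.mk _ (ell K m * p) := by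
    intro p
    show lq * _ = _
    rw [hlq, ← map_mul]
    rfl
  -- (1) E raises degree
  have hQe : ∀ (d : ℕ), ∀ v ∈ Q (K := K) c d, E v ∈ Q (K := K) c (d + 1) := by
    intro d v hv
    obtain ⟨p, hp, rfl⟩ := (mem_Q c).mp hv
    rw [hEmk p]
    refine (mem_Q c).mpr ⟨ell K m * p, ?_, rfl⟩
    rw [mem_homogeneousSubmodule, show d + 1 = 1 + d from by omega]
    exact ell_isHomogeneous.mul ((mem_homogeneousSubmodule _ _).mp hp)
  -- (2) F lowers degree
  have hQf : ∀ (d : ℕ), ∀ v ∈ Q (K := K) c (d + 1), Fb v ∈ Q (K := K) c d := by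
    intro d v hv
    obtain ⟨p, hp, rfl⟩ := (mem_Q c).mp hv
    rw [hFb p]
    exact (mem_Q c).mpr ⟨Fop c p, Fop_mem_homogeneous c hp, rfl⟩
  -- (3) F kills degree 0
  have hQf0 : ∀ v ∈ Q (K := K) c 0, Fb v = 0 := by
    intro v hv
    obtain ⟨p, hp, rfl⟩ := (mem_Q c).mp hv
    rw [hFb p, Fop_zero_degree c hp]
    exact map_zero _
  -- (4) commutator identity
  have hQcomm : ∀ (d : ℕ), ∀ v ∈ Q (K := K) c d, Fb (E v) - E (Fb v) = (((N : K) - 2 * d)) • v := by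
    intro d v hv
    obtain ⟨p, hp, rfl⟩ := (mem_Q c).mp hv
    rw [hEmk p, hFb, hFb, hEmk, ← map_sub,
      comm_identity c hc ((mem_homogeneousSubmodule _ _).mp hp), ← smul_eq_C_mul, hsmul]
  -- (5) high degrees vanish
  have hQhigh : ∀ (d : ℕ), N < d → ∀ v ∈ Q (K := K) c d, v = 0 := by
    intro d hd v hv
    obtain ⟨p, hp, rfl⟩ := (mem_Q c).mp hv
    exact Ideal.Quotient.eq_zero_iff_mem.mpr (high_degree_mem_ideal c hc hp hd)
  -- (6) finite dimensionality
  haveI hfin : Module.Finite K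
      (MvPolynomial (Fin m) K ⧸ Ideal.span (Set.range fun i => (X i : MvPolynomial (Fin m) K) ^ c i)) := by
    set cb : Fin m →₀ ℕ := Finsupp.equivFunOnFinite.symm (fun i => c i - 1) with hcb
    constructor
    rw [Submodule.fg_def]
    refine ⟨(fun a => Ideal.Quotient.mk _ (monomial a (1 : K))) '' (Set.Iic cb),
      (Set.finite_Iic cb).image _, ?_⟩
    rw [eq_top_iff]
    rintro x -
    obtain ⟨p, rfl⟩ := Ideal.Quotient.mk_surjective x
    rw [show p = ∑ a ∈ p.support, monomial a (coeff a p) from (support_sum_monomial_coeff p).symm,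
      map_sum]
    apply Submodule.sum_mem
    intro a _
    by_cases h : ∀ j, a j ≤ c j - 1
    · have hle : a ≤ cb := by
        rw [Finsupp.le_def]
        intro j
        simpa [hcb] using h j
      have : monomial a (coeff a p) = (coeff a p) • monomial a (1 : K) := by
        rw [smul_monomial, smul_eq_mul, mul_one]
      rw [this, hsmul]
      exact Submodule.smul_mem _ _ (Submodule.subset_span ⟨a, hle, rfl⟩)
    · push_neg at h
      obtain ⟨j, hj⟩ := h
      have hcj : c j ≤ a j := by have := hc j; omega
      rw [Ideal.Quotient.eq_zero_iff_mem.mpr (monomial_mem_ideal c _ hcj)]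
      exact Submodule.zero_mem _
  -- (7) powers of E raise degree
  have hEpow : ∀ (r d : ℕ), ∀ v ∈ Q (K := K) c d, (E ^ r) v ∈ Q (K := K) c (d + r) := by
    intro r
    induction r with
    | zero => intro d v hv; simpa using hv
    | succ r ih =>
      intro d v hv
      rw [pow_succ, Module.End.mul_apply, show d + (r + 1) = (d + 1) + r from by omega]
      exact ih (d + 1) (E v) (hQe d v hv)
  -- (8) powers of F lower degree
  have hFpow : ∀ (r d : ℕ), ∀ v ∈ Q (K := K) c (d + r), (Fb ^ r) v ∈ Q (K := K) c d := by
    intro r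
    induction r with
    | zero => intro d v hv; simpa using hv
    | succ r ih =>
      intro d v hv
      rw [pow_succ, Module.End.mul_apply]
      apply ih
      apply hQf (d + r)
      rw [show d + r + 1 = d + (r + 1) from by omega]
      exact hv
  -- (9) injectivity of E powers
  have injE : ∀ d : ℕ, 2 * d ≤ N → ∀ v ∈ Q (K := K) c d, (E ^ (N - 2 * d)) v = 0 → v = 0 :=
    sl2_injective (Q c) E Fb N hQcomm hQe hQf hQf0
  -- (10) injectivity of F powers (mirrored grading)
  have injF : ∀ d : ℕ, 2 * d ≤ N → ∀ v ∈ Q (K := K) c (N - d), (Fb ^ (N - 2 * d)) v = 0 → v = 0 := by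
    set V' : ℕ → Submodule K (MvPolynomial (Fin m) K ⧸
        Ideal.span (Set.range fun i => (X i : MvPolynomial (Fin m) K) ^ c i)) :=
      fun d => if d ≤ N then Q (K := K) c (N - d) else ⊥ with hV'
    have hVmem : ∀ d : ℕ, d ≤ N → ∀ v, (v ∈ V' d ↔ v ∈ Q (K := K) c (N - d)) := by
      intro d hd v
      rw [hV']
      simp [hd]
    have hVcomm : ∀ d : ℕ, ∀ v ∈ V' d, E (Fb v) - Fb (E v) = (((N : K) - 2 * d)) • v := by
      intro d v hv
      by_cases hd : d ≤ N
      · have hv' : v ∈ Q (K := K) c (N - d) := (hVmem d hd v).mp hv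
        have := hQcomm (N - d) v hv'
        have hcast : ((N : K) - 2 * ((N - d : ℕ) : K)) = -(((N : K) - 2 * d)) := by
          rw [Nat.cast_sub hd]; ring
        rw [hcast] at this
        have := congrArg Neg.neg this
        rw [neg_sub, neg_smul, neg_neg] at this
        exact this
      · have : v = 0 := by
          rw [hV'] at hv
          simp [hd] at hv
          exact hv
        simp [this]
    have hVe : ∀ d : ℕ, ∀ v ∈ V' d, Fb v ∈ V' (d + 1) := by
      intro d v hv
      by_cases hd : d + 1 ≤ N
      · rw [hVmem _ (by omega) v] at hv
        rw [hVmem _ hd]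
        apply hQf
        rw [show N - (d + 1) + 1 = N - d from by omega]
        exact hv
      · by_cases hd2 : d ≤ N
        · have hdN : d = N := by omega
          subst hdN
          have hv' : v ∈ Q (K := K) c 0 := by
            rw [hVmem _ le_rfl v] at hv
            rwa [Nat.sub_self] at hv
          rw [hQf0 v hv']
          exact Submodule.zero_mem _
        · have : v = 0 := by
            rw [hV'] at hv
            simp [hd2] at hv
            exact hv
          rw [this, map_zero]
          exact Submodule.zero_mem _
    have hVf : ∀ d : ℕ, ∀ v ∈ V' (d + 1), E v ∈ V' d := by
      intro d v hv
      by_cases hd : d + 1 ≤ N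
      · rw [hVmem _ hd v] at hv
        rw [hVmem _ (by omega)]
        have := hQe (N - (d + 1)) v hv
        rwa [show N - (d + 1) + 1 = N - d from by omega] at this
      · have : v = 0 := by
          rw [hV'] at hv
          simp [hd] at hv
          exact hv
        rw [this, map_zero]
        exact Submodule.zero_mem _
    have hVf0 : ∀ v ∈ V' 0, E v = 0 := by
      intro v hv
      rw [hVmem _ (by omega) v, Nat.sub_zero] at hv
      exact hQhigh (N + 1) (by omega) _ (hQe N v hv)
    have key := sl2_injective V' Fb E N hVcomm hVe hVf hVf0
    intro d hd v hv hfv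
    exact key d hd v ((hVmem d (by omega) v).mpr hv) hfv
  -- relation between E powers and multiplication
  have hEk : ∀ (k : ℕ) (x), (E ^ k) x = lq ^ k * x := by
    intro k x
    rw [hE, LinearMap.pow_mulLeft]
    rfl
  constructor
  · exact ⟨∑ i, X i, ell_isHomogeneous, rfl⟩
  · intro i k hk
    by_cases hcase : 2 * i + k ≤ N
    · left
      intro x hx hkx
      apply injE i (by omega) x hx
      have : N - 2 * i = (N - 2 * i - k) + k := by omega
      rw [this, pow_add, Module.End.mul_apply, hEk k x, hkx, map_zero]
    · right
      intro y hy
      by_cases hik : i + k ≤ N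
      · set d : ℕ := N - (i + k) with hd
        have h2d : 2 * d ≤ N := by omega
        have hNd : N - d = i + k := by omega
        have hdik : d + (N - 2 * d) = i + k := by omega
        -- the restricted maps
        have hφmap : ∀ x ∈ Q (K := K) c d, (E ^ (N - 2 * d)) x ∈ Q (K := K) c (i + k) := by
          intro x hx
          have := hEpow (N - 2 * d) d x hx
          rwa [hdik] at this
        have hψmap : ∀ x ∈ Q (K := K) c (i + k), (Fb ^ (N - 2 * d)) x ∈ Q (K := K) c d := by
          intro x hx
          apply hFpow
          rwa [hdik]
        set φ : Q (K := K) c d →ₗ[K] Q (K := K) c (i + k) := (E ^ (N - 2 * d)).restrict hφmap with hφ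
        set ψ : Q (K := K) c (i + k) →ₗ[K] Q (K := K) c d := (Fb ^ (N - 2 * d)).restrict hψmap with hψ
        have hφinj : Function.Injective φ := by
          intro a b hab
          have hval : (E ^ (N - 2 * d)) (a : _) = (E ^ (N - 2 * d)) (b : _) := by
            have := congrArg Subtype.val hab
            simpa [hφ, LinearMap.restrict_apply] using this
          have hsub : (E ^ (N - 2 * d)) ((a : _) - (b : _)) = 0 := by
            rw [map_sub, hval, sub_self]
          have := injE d h2d ((a : _) - (b : _)) (Submodule.sub_mem _ a.2 b.2) hsub
          exact Subtype.ext (by rwa [sub_eq_zero] at this)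
        have hψinj : Function.Injective ψ := by
          intro a b hab
          have hval : (Fb ^ (N - 2 * d)) (a : _) = (Fb ^ (N - 2 * d)) (b : _) := by
            have := congrArg Subtype.val hab
            simpa [hψ, LinearMap.restrict_apply] using this
          have hsub : (Fb ^ (N - 2 * d)) ((a : _) - (b : _)) = 0 := by
            rw [map_sub, hval, sub_self]
          have hmem : (a.val - b.val) ∈ Q (K := K) c (N - d) := by
            rw [hNd]
            exact Submodule.sub_mem _ a.2 b.2
          have := injF d h2d (a.val - b.val) hmem hsub
          exact Subtype.ext (by rwa [sub_eq_zero] at this)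
        have hle1 : Module.finrank K (Q (K := K) c d) ≤ Module.finrank K (Q (K := K) c (i + k)) :=
          LinearMap.finrank_le_finrank_of_injective hφinj
        have hle2 : Module.finrank K (Q (K := K) c (i + k)) ≤ Module.finrank K (Q (K := K) c d) :=
          LinearMap.finrank_le_finrank_of_injective hψinj
        have hφsurj : Function.Surjective φ :=
          (LinearMap.injective_iff_surjective_of_finrank_eq_finrank
            (le_antisymm hle1 hle2)).mp hφinj
        obtain ⟨⟨z, hz⟩, hzeq⟩ := hφsurj ⟨y, hy⟩
        have hzval : (E ^ (N - 2 * d)) z = y := by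
          have := congrArg Subtype.val hzeq
          simpa [hφ, LinearMap.restrict_apply] using this
        refine ⟨(E ^ (i - d)) z, ?_, ?_⟩
        · have := hEpow (i - d) d z hz
          rwa [show d + (i - d) = i from by omega] at this
        · rw [← hEk k]
          have : (E ^ k) ((E ^ (i - d)) z) = (E ^ (N - 2 * d)) z := by
            rw [← Module.End.mul_apply, ← pow_add, show k + (i - d) = N - 2 * d from by omega]
          rw [this, hzval]
      · refine ⟨0, Submodule.zero_mem _, ?_⟩
        rw [mul_zero]
        exact (hQhigh (i + k) (by omega) y hy).symm

end SWProof

/-- (Stanley–Watanabe) An Artinian monomial complete intersection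
`A = K[x_1,…,x_m]/(x_1^{c_1},…,x_m^{c_m})` over a field of characteristic zero has the strong
Lefschetz property, with `ℓ = x_1 + ⋯ + x_m` a strong Lefschetz element. -/
theorem stmt19 [CharZero K] {m : ℕ} (c : Fin m → ℕ) (hc : ∀ i, 1 ≤ c i) :
    (Ideal.Quotient.mk (Ideal.span (Set.range fun i => (X i : MvPolynomial (Fin m) K) ^ c i))
        (∑ i, X i)) ∈
      (homogeneousSubmodule (Fin m) K 1).map
        (Ideal.Quotient.mkₐ K
          (Ideal.span (Set.range fun i => (X i : MvPolynomial (Fin m) K) ^ c i))).toLinearMap ∧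
    ∀ i k : ℕ, 0 < k →
      (∀ x ∈ (homogeneousSubmodule (Fin m) K i).map
          (Ideal.Quotient.mkₐ K
            (Ideal.span (Set.range fun i => (X i : MvPolynomial (Fin m) K) ^ c i))).toLinearMap,
        (Ideal.Quotient.mk _ (∑ i, X i)) ^ k * x = 0 → x = 0) ∨
      (∀ y ∈ (homogeneousSubmodule (Fin m) K (i + k)).map
          (Ideal.Quotient.mkₐ K
            (Ideal.span (Set.range fun i => (X i : MvPolynomial (Fin m) K) ^ c i))).toLinearMap,
        ∃ x ∈ (homogeneousSubmodule (Fin m) K i).map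
          (Ideal.Quotient.mkₐ K
            (Ideal.span (Set.range fun i => (X i : MvPolynomial (Fin m) K) ^ c i))).toLinearMap,
          (Ideal.Quotient.mk _ (∑ i, X i)) ^ k * x = y) :=
  stmt19' c hc
end
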